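/- arXiv:2504.09410 — 2 statements merged into one kernel-verified Lean document; each statement's English description precedes it below -/
import Mathlib

section
/- Let d ≥ 1, δ > 0, ι > 0, λ > 0, Λ > 0, x₀ ∈ ℝ^d, and let I_δ := x₀ + δ·[−1/2,1/2]^d be a cube with Lebesgue measure. Let A : ℝ^d → ℝ^{d×d} be measurable and satisfy, for a.e. x ∈ I_δ and all ξ ∈ ℝ^d, A(x)ξ·ξ ≥ λ|ξ|² and A(x)ξ·ξ ≥ |A(x)ξ|²/Λ. Let V_l(x) = c + ξ₀·x be an affine function and let v be twice continuously differentiable on a neighborhood of the closed cube I_δ and satisfy the variational identity ∫_{I_δ} ( A(x)∇v(x)·∇(v−V_l)(x) + ι² ⟨∇²v(x), ∇²(v−V_l)(x)⟩_F ) dx = 0, where ⟨·,·⟩_F is the Frobenius inner product of Hessian matrices. Then (∫_{I_δ}|∇v|² dx)^{1/2} + ι (∫_{I_δ}|∇²v|_F² dx)^{1/2} ≤ (√Λ + √(Λ/λ)) · (∫_{I_δ}|∇V_l|² dx)^{1/2} = (√Λ + √(Λ/λ)) δ^{d/2}|ξ₀|. -/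
open MeasureTheory Matrix

noncomputable section

/-- The cube `x₀ + r·[-1/2,1/2]^d`. -/
def cube (d : ℕ) (x₀ : Fin d → ℝ) (r : ℝ) : Set (Fin d → ℝ) :=
  {x | ∀ i, |x i - x₀ i| ≤ r / 2}

/-- The gradient of `v : ℝ^d → ℝ`. -/
def grad (d : ℕ) (v : (Fin d → ℝ) → ℝ) (x : Fin d → ℝ) : Fin d → ℝ :=
  fun i => fderiv ℝ v x (Pi.single i 1)

/-- The Hessian matrix of `v : ℝ^d → ℝ`. -/
def hess (d : ℕ) (v : (Fin d → ℝ) → ℝ) (x : Fin d → ℝ) : Matrix (Fin d) (Fin d) ℝ :=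
  Matrix.of fun i j => fderiv ℝ (fun y => fderiv ℝ v y (Pi.single j 1)) x (Pi.single i 1)

/-- Frobenius inner product of matrices. -/
def frob (d : ℕ) (M N : Matrix (Fin d) (Fin d) ℝ) : ℝ := ∑ i, ∑ j, M i j * N i j

lemma young_pt (x y t : ℝ) (ht : 0 < t) : x * y ≤ x ^ 2 / (2 * t) + t * y ^ 2 / 2 := by
  rw [div_add_div _ _ (by positivity) (by norm_num), le_div_iff₀ (by positivity)]
  nlinarith [sq_nonneg (x - t * y), ht.le]

lemma young_opt (a b c : ℝ) (hb : 0 ≤ b) (hc : 0 ≤ c)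
    (h : ∀ t : ℝ, 0 < t → a ≤ b / (2 * t) + t * c / 2) :
    a ≤ Real.sqrt b * Real.sqrt c := by
  rcases hb.eq_or_lt with hb0 | hb0
  · have ha : a ≤ 0 := by
      by_contra hcon
      push_neg at hcon
      rcases hc.eq_or_lt with hc0 | hc0
      · have h1 := h 1 one_pos
        rw [← hb0, ← hc0] at h1
        norm_num at h1
        linarith
      · have h1 := h (a / c) (by positivity)
        rw [← hb0] at h1
        have : a ≤ a / 2 := by
          rw [zero_div, zero_add] at h1
          calc a ≤ a / c * c / 2 := h1
          _ = a / 2 := by field_simp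
        linarith
    exact ha.trans (by positivity)
  · rcases hc.eq_or_lt with hc0 | hc0
    · have ha : a ≤ 0 := by
        by_contra hcon
        push_neg at hcon
        have h1 := h (b / a) (by positivity)
        rw [← hc0] at h1
        have : a ≤ a / 2 := by
          calc a ≤ b / (2 * (b / a)) + b / a * 0 / 2 := h1
          _ = a / 2 := by field_simp; ring
        linarith
      exact ha.trans (by positivity)
    · have hsb : (0:ℝ) < Real.sqrt b := Real.sqrt_pos.mpr hb0
      have hsc : (0:ℝ) < Real.sqrt c := Real.sqrt_pos.mpr hc0
      have h1 := h (Real.sqrt b / Real.sqrt c) (by positivity)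
      have hbb : Real.sqrt b * Real.sqrt b = b := Real.mul_self_sqrt hb
      have hcc : Real.sqrt c * Real.sqrt c = c := Real.mul_self_sqrt hc
      calc a ≤ b / (2 * (Real.sqrt b / Real.sqrt c)) + Real.sqrt b / Real.sqrt c * c / 2 := h1
      _ = Real.sqrt b * Real.sqrt c := by
          field_simp
          nlinarith [hbb, hcc]

lemma cube_eq (d : ℕ) (x₀ : Fin d → ℝ) (r : ℝ) :
    cube d x₀ r = Set.univ.pi fun i => Set.Icc (x₀ i - r / 2) (x₀ i + r / 2) := by
  ext x
  simp only [cube, Set.mem_setOf_eq, Set.mem_pi, Set.mem_univ, true_implies, Set.mem_Icc, abs_le]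
  refine forall_congr' fun i => ?_
  constructor <;> rintro ⟨h1, h2⟩ <;> constructor <;> linarith

lemma cube_isCompact (d : ℕ) (x₀ : Fin d → ℝ) (r : ℝ) : IsCompact (cube d x₀ r) := by
  rw [cube_eq]; exact isCompact_univ_pi fun i => isCompact_Icc

lemma cube_measurableSet (d : ℕ) (x₀ : Fin d → ℝ) (r : ℝ) : MeasurableSet (cube d x₀ r) := by
  rw [cube_eq]; exact MeasurableSet.univ_pi fun i => measurableSet_Icc

lemma cube_volume (d : ℕ) (x₀ : Fin d → ℝ) (r : ℝ) (hr : 0 < r) :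
    (volume (cube d x₀ r)).toReal = r ^ d := by
  rw [cube_eq, volume_pi_pi]
  have : ∀ i : Fin d, volume (Set.Icc (x₀ i - r / 2) (x₀ i + r / 2)) = ENNReal.ofReal r := by
    intro i; rw [Real.volume_Icc]; congr 1; ring
  simp only [this, Finset.prod_const, Finset.card_univ, Fintype.card_fin]
  rw [ENNReal.toReal_pow, ENNReal.toReal_ofReal hr.le]

section derivfacts
variable {d : ℕ} {U : Set (Fin d → ℝ)} {v : (Fin d → ℝ) → ℝ}

lemma dot_eq_clm (ξ₀ : Fin d → ℝ) :
    ∀ y, ξ₀ ⬝ᵥ y = (∑ j, ξ₀ j • (ContinuousLinearMap.proj j : (Fin d → ℝ) →L[ℝ] ℝ)) y := by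
  intro y
  simp [ContinuousLinearMap.sum_apply, ContinuousLinearMap.smul_apply,
    ContinuousLinearMap.proj_apply, dotProduct, smul_eq_mul]

lemma grad_affine (c : ℝ) (ξ₀ : Fin d → ℝ) (x : Fin d → ℝ) :
    grad d (fun y => c + ξ₀ ⬝ᵥ y) x = ξ₀ := by
  classical
  set L : (Fin d → ℝ) →L[ℝ] ℝ := ∑ j, ξ₀ j • ContinuousLinearMap.proj j with hLdef
  have hL := dot_eq_clm ξ₀
  have hfun : (fun y : Fin d → ℝ => c + ξ₀ ⬝ᵥ y) = fun y => c + L y :=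
    funext fun y => by rw [hL]
  funext i
  show fderiv ℝ (fun y => c + ξ₀ ⬝ᵥ y) x (Pi.single i 1) = ξ₀ i
  rw [hfun, fderiv_const_add, L.fderiv, ← hL, dotProduct_single, mul_one]

lemma contDiffOn_fderiv (hU : IsOpen U) (hC : ContDiffOn ℝ 2 v U) :
    ContDiffOn ℝ 1 (fderiv ℝ v) U := by
  have h2 : ContDiffOn ℝ (1 + 1) v U := by
    convert hC using 2
    exact one_add_one_eq_two
  exact ((contDiffOn_succ_iff_fderiv_of_isOpen hU).mp h2).2.2

lemma grad_contOn (hU : IsOpen U) (hC : ContDiffOn ℝ 2 v U) (i : Fin d) :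
    ContinuousOn (fun x => grad d v x i) U := by
  simpa [Function.comp_def, grad, ContinuousLinearMap.apply_apply] using
    (ContinuousLinearMap.apply ℝ ℝ (Pi.single i (1:ℝ))).continuous.comp_continuousOn
      (contDiffOn_fderiv hU hC).continuousOn

lemma hess_contOn (hU : IsOpen U) (hC : ContDiffOn ℝ 2 v U) (i j : Fin d) :
    ContinuousOn (fun x => hess d v x i j) U := by
  have hwj : ContDiffOn ℝ 1 (fun y => fderiv ℝ v y (Pi.single j 1)) U := by
    simpa [Function.comp_def, ContinuousLinearMap.apply_apply] using
      (ContinuousLinearMap.apply ℝ ℝ (Pi.single j (1:ℝ))).contDiff.comp_contDiffOn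
        (contDiffOn_fderiv hU hC)
  have h2 := hwj.continuousOn_fderiv_of_isOpen hU le_rfl
  simpa [Function.comp_def, hess, ContinuousLinearMap.apply_apply] using
    (ContinuousLinearMap.apply ℝ ℝ (Pi.single i (1:ℝ))).continuous.comp_continuousOn h2

lemma grad_measurable (v : (Fin d → ℝ) → ℝ) (i : Fin d) :
    Measurable fun x => grad d v x i :=
  measurable_fderiv_apply_const ℝ v _

lemma grad_sub_affine (hU : IsOpen U) (hC : ContDiffOn ℝ 2 v U) (c : ℝ) (ξ₀ : Fin d → ℝ)
    {x : Fin d → ℝ} (hx : x ∈ U) :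
    grad d (fun y => v y - (c + ξ₀ ⬝ᵥ y)) x = fun i => grad d v x i - ξ₀ i := by
  classical
  set L : (Fin d → ℝ) →L[ℝ] ℝ := ∑ j, ξ₀ j • ContinuousLinearMap.proj j with hLdef
  have hL := dot_eq_clm ξ₀
  have hfun : (fun y => v y - (c + ξ₀ ⬝ᵥ y)) = fun y => v y - (c + L y) :=
    funext fun y => by rw [hL]
  have hdv : DifferentiableAt ℝ v x :=
    (hC.differentiableOn (by norm_num)).differentiableAt (hU.mem_nhds hx)
  have hda : DifferentiableAt ℝ (fun y : Fin d → ℝ => c + L y) x :=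
    (L.differentiable.const_add c).differentiableAt
  funext i
  show fderiv ℝ (fun y => v y - (c + ξ₀ ⬝ᵥ y)) x (Pi.single i 1) = _
  rw [hfun, fderiv_fun_sub hdv hda, ContinuousLinearMap.sub_apply, fderiv_const_add, L.fderiv,
    ← hL, dotProduct_single, mul_one]
  rfl

lemma hess_sub_affine (hU : IsOpen U) (hC : ContDiffOn ℝ 2 v U) (c : ℝ) (ξ₀ : Fin d → ℝ)
    {x : Fin d → ℝ} (hx : x ∈ U) :
    hess d (fun y => v y - (c + ξ₀ ⬝ᵥ y)) x = hess d v x := by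
  have key : ∀ j : Fin d,
      (fun y => fderiv ℝ (fun z => v z - (c + ξ₀ ⬝ᵥ z)) y (Pi.single j 1)) =ᶠ[nhds x]
      (fun y => fderiv ℝ v y (Pi.single j 1) - ξ₀ j) := by
    intro j
    filter_upwards [hU.mem_nhds hx] with y hy
    exact congrFun (grad_sub_affine hU hC c ξ₀ hy) j
  ext i j
  show fderiv ℝ _ x (Pi.single i 1) = fderiv ℝ _ x (Pi.single i 1)
  rw [(key j).fderiv_eq, fderiv_sub_const]

end derivfacts


set_option maxHeartbeats 2000000 in
/-- A priori energy estimate for the HMM cell problem. -/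
theorem cell_problem_energy_estimate
    (d : ℕ) (hd : 1 ≤ d) (δ ι lam Lam : ℝ)
    (hδ : 0 < δ) (hι : 0 < ι) (hlam : 0 < lam) (hLam : 0 < Lam)
    (x₀ : Fin d → ℝ) (A : (Fin d → ℝ) → Matrix (Fin d) (Fin d) ℝ)
    (hAmeas : ∀ i j, Measurable (fun x => A x i j))
    (hell : ∀ᵐ x ∂(volume.restrict (cube d x₀ δ)), ∀ ξ : Fin d → ℝ,
      lam * ∑ i, ξ i ^ 2 ≤ (A x).mulVec ξ ⬝ᵥ ξ ∧
      (∑ i, ((A x).mulVec ξ) i ^ 2) / Lam ≤ (A x).mulVec ξ ⬝ᵥ ξ)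
    (c : ℝ) (ξ₀ : Fin d → ℝ)
    (v : (Fin d → ℝ) → ℝ)
    (hv : ∃ U : Set (Fin d → ℝ), IsOpen U ∧ cube d x₀ δ ⊆ U ∧ ContDiffOn ℝ 2 v U)
    (hvar : (∫ x in cube d x₀ δ,
        ((A x).mulVec (grad d v x) ⬝ᵥ grad d (fun y => v y - (c + ξ₀ ⬝ᵥ y)) x
          + ι ^ 2 * frob d (hess d v x) (hess d (fun y => v y - (c + ξ₀ ⬝ᵥ y)) x))) = 0) :
    Real.sqrt (∫ x in cube d x₀ δ, ∑ i, grad d v x i ^ 2)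
        + ι * Real.sqrt (∫ x in cube d x₀ δ, frob d (hess d v x) (hess d v x))
      ≤ (Real.sqrt Lam + Real.sqrt (Lam / lam)) *
          Real.sqrt (∫ x in cube d x₀ δ, ∑ i, grad d (fun y => c + ξ₀ ⬝ᵥ y) x i ^ 2) ∧
    Real.sqrt (∫ x in cube d x₀ δ, ∑ i, grad d (fun y => c + ξ₀ ⬝ᵥ y) x i ^ 2)
      = δ ^ ((d : ℝ) / 2) * Real.sqrt (∑ i, ξ₀ i ^ 2) := by
  classical
  obtain ⟨U, hU, hKU, hC⟩ := hv
  set K := cube d x₀ δ with hKdef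
  have hKmeas := cube_measurableSet d x₀ δ
  have hKcomp := cube_isCompact d x₀ δ
  have hKfin : volume K ≠ ⊤ := hKcomp.measure_lt_top.ne
  set S : ℝ := ∑ i, ξ₀ i ^ 2 with hSdef
  have hS0 : 0 ≤ S := by positivity
  set V : ℝ := (volume K).toReal * S with hVdef
  have hV0 : 0 ≤ V := mul_nonneg ENNReal.toReal_nonneg hS0
  -- the integral of the constant S over K
  have hVint : ∫ _ in K, S = V := by
    rw [setIntegral_const, smul_eq_mul, hVdef]; rfl
  -- rewrite the affine gradient integral
  have hVlint : ∫ x in K, ∑ i, grad d (fun y => c + ξ₀ ⬝ᵥ y) x i ^ 2 = V := by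
    rw [← hVint]
    refine integral_congr_ae (Filter.Eventually.of_forall fun x => ?_)
    show ∑ i, grad d (fun y => c + ξ₀ ⬝ᵥ y) x i ^ 2 = S
    rw [grad_affine c ξ₀ x]
  -- pointwise functions
  -- measurability
  have hgmeas : ∀ i, Measurable fun x => grad d v x i := fun i => grad_measurable v i
  have hAgmeas : ∀ i, Measurable fun x => (A x).mulVec (grad d v x) i := by
    intro i
    have : (fun x => (A x).mulVec (grad d v x) i)
        = fun x => ∑ j, A x i j * grad d v x j := by
      funext x; simp [Matrix.mulVec, dotProduct]
    rw [this]
    exact Finset.measurable_sum _ fun j _ => (hAmeas i j).mul (hgmeas j)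
  have hf1meas : Measurable fun x => (A x).mulVec (grad d v x) ⬝ᵥ grad d v x := by
    refine Finset.measurable_sum _ fun i _ => (hAgmeas i).mul (hgmeas i)
  have hf3meas : Measurable fun x => (A x).mulVec (grad d v x) ⬝ᵥ ξ₀ := by
    refine Finset.measurable_sum _ fun i _ => (hAgmeas i).mul measurable_const
  have hfBmeas : Measurable fun x => ∑ i, ((A x).mulVec (grad d v x)) i ^ 2 :=
    Finset.measurable_sum _ fun i _ => (hAgmeas i).pow_const 2
  -- a.e. pointwise bounds
  have hae : ∀ᵐ x ∂(volume.restrict K),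
      0 ≤ (A x).mulVec (grad d v x) ⬝ᵥ grad d v x ∧
      lam * ∑ i, grad d v x i ^ 2 ≤ (A x).mulVec (grad d v x) ⬝ᵥ grad d v x ∧
      (A x).mulVec (grad d v x) ⬝ᵥ grad d v x ≤ Lam * ∑ i, grad d v x i ^ 2 ∧
      ∑ i, ((A x).mulVec (grad d v x)) i ^ 2 ≤
        Lam * ((A x).mulVec (grad d v x) ⬝ᵥ grad d v x) := by
    filter_upwards [hell] with x hx
    obtain ⟨h1, h2⟩ := hx (grad d v x)
    have hGnn : (0:ℝ) ≤ ∑ i, grad d v x i ^ 2 := by positivity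
    have hf1nn : 0 ≤ (A x).mulVec (grad d v x) ⬝ᵥ grad d v x :=
      le_trans (by positivity) h1
    have hfb : ∑ i, ((A x).mulVec (grad d v x)) i ^ 2 ≤
        Lam * ((A x).mulVec (grad d v x) ⬝ᵥ grad d v x) := by
      rw [div_le_iff₀ hLam] at h2
      linarith [h2]
    refine ⟨hf1nn, h1, ?_, hfb⟩
    have hcs : ((A x).mulVec (grad d v x) ⬝ᵥ grad d v x) ^ 2 ≤
        (∑ i, ((A x).mulVec (grad d v x)) i ^ 2) * ∑ i, grad d v x i ^ 2 := by
      simpa [dotProduct] using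
        Finset.sum_mul_sq_le_sq_mul_sq Finset.univ
          (fun i => ((A x).mulVec (grad d v x)) i) (fun i => grad d v x i)
    rcases hf1nn.eq_or_lt with h0 | h0
    · rw [← h0]; positivity
    · have step : ((A x).mulVec (grad d v x) ⬝ᵥ grad d v x) ^ 2 ≤
          (Lam * ((A x).mulVec (grad d v x) ⬝ᵥ grad d v x)) * ∑ i, grad d v x i ^ 2 :=
        hcs.trans (mul_le_mul_of_nonneg_right hfb hGnn)
      have := le_of_mul_le_mul_left (by nlinarith [step] :
        ((A x).mulVec (grad d v x) ⬝ᵥ grad d v x) * ((A x).mulVec (grad d v x) ⬝ᵥ grad d v x)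
          ≤ ((A x).mulVec (grad d v x) ⬝ᵥ grad d v x) * (Lam * ∑ i, grad d v x i ^ 2)) h0
      exact this
  -- integrability
  have hGcont : ContinuousOn (fun x => ∑ i, grad d v x i ^ 2) K := by
    refine ContinuousOn.mono ?_ hKU
    exact continuousOn_finset_sum _ fun i _ => (grad_contOn hU hC i).pow 2
  have intG : IntegrableOn (fun x => ∑ i, grad d v x i ^ 2) K volume :=
    hGcont.integrableOn_compact hKcomp
  have intF2 : IntegrableOn (fun x => frob d (hess d v x) (hess d v x)) K volume := by
    refine ContinuousOn.integrableOn_compact hKcomp (ContinuousOn.mono ?_ hKU)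
    refine continuousOn_finset_sum _ fun i _ => continuousOn_finset_sum _ fun j _ => ?_
    exact (hess_contOn hU hC i j).mul (hess_contOn hU hC i j)
  have intf1 : IntegrableOn (fun x => (A x).mulVec (grad d v x) ⬝ᵥ grad d v x) K volume := by
    refine Integrable.mono' (intG.const_mul Lam) hf1meas.aestronglyMeasurable ?_
    filter_upwards [hae] with x hx
    rw [Real.norm_eq_abs, abs_of_nonneg hx.1]
    exact hx.2.2.1
  have intB : IntegrableOn (fun x => ∑ i, ((A x).mulVec (grad d v x)) i ^ 2) K volume := by
    refine Integrable.mono' (intG.const_mul (Lam * Lam)) hfBmeas.aestronglyMeasurable ?_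
    filter_upwards [hae] with x hx
    rw [Real.norm_eq_abs, abs_of_nonneg (by positivity)]
    calc ∑ i, ((A x).mulVec (grad d v x)) i ^ 2
        ≤ Lam * ((A x).mulVec (grad d v x) ⬝ᵥ grad d v x) := hx.2.2.2
      _ ≤ Lam * (Lam * ∑ i, grad d v x i ^ 2) :=
          mul_le_mul_of_nonneg_left hx.2.2.1 hLam.le
      _ = Lam * Lam * ∑ i, grad d v x i ^ 2 := by ring
  have intf3 : IntegrableOn (fun x => (A x).mulVec (grad d v x) ⬝ᵥ ξ₀) K volume := by
    have intbound : IntegrableOn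
        (fun x => ((∑ i, ((A x).mulVec (grad d v x)) i ^ 2) + S) / 2) K volume := by
      refine Integrable.div_const ?_ 2
      exact intB.add (integrableOn_const hKcomp.measure_lt_top.ne)
    refine Integrable.mono' intbound hf3meas.aestronglyMeasurable ?_
    refine Filter.Eventually.of_forall fun x => ?_
    rw [Real.norm_eq_abs]
    calc |(A x).mulVec (grad d v x) ⬝ᵥ ξ₀|
        ≤ ∑ i, |((A x).mulVec (grad d v x)) i * ξ₀ i| := by
          simpa [dotProduct] using
            Finset.abs_sum_le_sum_abs
              (fun i => ((A x).mulVec (grad d v x)) i * ξ₀ i) Finset.univ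
      _ ≤ ∑ i, (((A x).mulVec (grad d v x)) i ^ 2 + ξ₀ i ^ 2) / 2 := by
          refine Finset.sum_le_sum fun i _ => ?_
          rw [abs_mul]
          nlinarith [sq_nonneg (|((A x).mulVec (grad d v x)) i| - |ξ₀ i|),
            sq_abs (((A x).mulVec (grad d v x)) i), sq_abs (ξ₀ i),
            abs_nonneg (((A x).mulVec (grad d v x)) i), abs_nonneg (ξ₀ i)]
      _ = ((∑ i, ((A x).mulVec (grad d v x)) i ^ 2) + S) / 2 := by
          rw [hSdef, ← Finset.sum_add_distrib, Finset.sum_div]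
  -- rewrite the variational identity
  have hvar2 : ∫ x in K, ((A x).mulVec (grad d v x) ⬝ᵥ grad d v x
      - (A x).mulVec (grad d v x) ⬝ᵥ ξ₀
      + ι ^ 2 * frob d (hess d v x) (hess d v x)) = 0 := by
    rw [← hvar]
    refine setIntegral_congr_fun hKmeas fun x hx => ?_
    have hxU : x ∈ U := hKU hx
    have h1 : grad d (fun y => v y - (c + ξ₀ ⬝ᵥ y)) x = fun i => grad d v x i - ξ₀ i :=
      grad_sub_affine hU hC c ξ₀ hxU
    have h2 : hess d (fun y => v y - (c + ξ₀ ⬝ᵥ y)) x = hess d v x :=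
      hess_sub_affine hU hC c ξ₀ hxU
    rw [h1, h2]
    simp only [dotProduct, mul_sub, Finset.sum_sub_distrib]
  have i13 : Integrable (fun x => (A x).mulVec (grad d v x) ⬝ᵥ grad d v x
      - (A x).mulVec (grad d v x) ⬝ᵥ ξ₀) (volume.restrict K) := intf1.sub intf3
  have i2 : Integrable (fun x => ι ^ 2 * frob d (hess d v x) (hess d v x))
      (volume.restrict K) := intF2.const_mul _
  rw [integral_add i13 i2, integral_sub intf1 intf3, integral_const_mul] at hvar2
  -- basic facts in integral form
  have hE0 : 0 ≤ ∫ x in K, (A x).mulVec (grad d v x) ⬝ᵥ grad d v x :=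
    integral_nonneg_of_ae (hae.mono fun x hx => hx.1)
  have hG0 : (0:ℝ) ≤ ∫ x in K, ∑ i, grad d v x i ^ 2 := integral_nonneg fun x => by positivity
  have hB0 : (0:ℝ) ≤ ∫ x in K, ∑ i, ((A x).mulVec (grad d v x)) i ^ 2 :=
    integral_nonneg fun x => by positivity
  have hF20 : (0:ℝ) ≤ ∫ x in K, frob d (hess d v x) (hess d v x) := by
    refine integral_nonneg fun x => ?_
    exact Finset.sum_nonneg fun i _ => Finset.sum_nonneg fun j _ => mul_self_nonneg _
  have hGE : lam * ∫ x in K, ∑ i, grad d v x i ^ 2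
      ≤ ∫ x in K, (A x).mulVec (grad d v x) ⬝ᵥ grad d v x := by
    have := integral_mono_ae (intG.const_mul lam) intf1 (hae.mono fun x hx => hx.2.1)
    rwa [integral_const_mul] at this
  have hBE : (∫ x in K, ∑ i, ((A x).mulVec (grad d v x)) i ^ 2)
      ≤ Lam * ∫ x in K, (A x).mulVec (grad d v x) ⬝ᵥ grad d v x := by
    have := integral_mono_ae intB (intf1.const_mul Lam) (hae.mono fun x hx => hx.2.2.2)
    rwa [integral_const_mul] at this
  -- D ≤ √B √V  via Young with parameter
  have hD : (∫ x in K, (A x).mulVec (grad d v x) ⬝ᵥ ξ₀)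
      ≤ Real.sqrt (∫ x in K, ∑ i, ((A x).mulVec (grad d v x)) i ^ 2) * Real.sqrt V := by
    refine young_opt _ _ V hB0 hV0 fun t ht => ?_
    have hptw : ∀ x, (A x).mulVec (grad d v x) ⬝ᵥ ξ₀
        ≤ (∑ i, ((A x).mulVec (grad d v x)) i ^ 2) / (2 * t) + t * S / 2 := by
      intro x
      calc (A x).mulVec (grad d v x) ⬝ᵥ ξ₀
          = ∑ i, ((A x).mulVec (grad d v x)) i * ξ₀ i := rfl
        _ ≤ ∑ i, (((A x).mulVec (grad d v x)) i ^ 2 / (2 * t) + t * ξ₀ i ^ 2 / 2) :=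
            Finset.sum_le_sum fun i _ => young_pt _ _ t ht
        _ = (∑ i, ((A x).mulVec (grad d v x)) i ^ 2) / (2 * t) + t * S / 2 := by
            rw [Finset.sum_add_distrib, ← Finset.sum_div, hSdef, Finset.mul_sum,
              ← Finset.sum_div]
    have intc : IntegrableOn (fun _ : Fin d → ℝ => t * S / 2) K volume :=
      integrableOn_const hKcomp.measure_lt_top.ne
    have intsum : Integrable (fun x =>
        (∑ i, ((A x).mulVec (grad d v x)) i ^ 2) / (2 * t) + t * S / 2)
        (volume.restrict K) := (intB.div_const _).add intc
    have := integral_mono_ae intf3 intsum (Filter.Eventually.of_forall hptw)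
    rw [integral_add (intB.div_const _) intc, integral_div, setIntegral_const,
      smul_eq_mul] at this
    calc (∫ x in K, (A x).mulVec (grad d v x) ⬝ᵥ ξ₀)
        ≤ (∫ x in K, ∑ i, ((A x).mulVec (grad d v x)) i ^ 2) / (2 * t)
          + (volume K).toReal * (t * S / 2) := this
      _ = (∫ x in K, ∑ i, ((A x).mulVec (grad d v x)) i ^ 2) / (2 * t) + t * V / 2 := by
          rw [hVdef]; ring
  have hBsqrt : Real.sqrt (∫ x in K, ∑ i, ((A x).mulVec (grad d v x)) i ^ 2)
      ≤ Real.sqrt Lam * Real.sqrt (∫ x in K, (A x).mulVec (grad d v x) ⬝ᵥ grad d v x) := by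
    rw [← Real.sqrt_mul hLam.le]
    exact Real.sqrt_le_sqrt hBE
  -- abbreviations
  set G := ∫ x in K, ∑ i, grad d v x i ^ 2 with hGdef
  set F2 := ∫ x in K, frob d (hess d v x) (hess d v x) with hF2def
  set E := ∫ x in K, (A x).mulVec (grad d v x) ⬝ᵥ grad d v x with hEdef
  set B := ∫ x in K, ∑ i, ((A x).mulVec (grad d v x)) i ^ 2 with hBdef
  set D := ∫ x in K, (A x).mulVec (grad d v x) ⬝ᵥ ξ₀ with hDdef
  clear_value G F2 E B D
  have key : E + ι ^ 2 * F2 ≤ Real.sqrt Lam * Real.sqrt E * Real.sqrt V := by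
    have h1 : E + ι ^ 2 * F2 = D := by linarith [hvar2]
    rw [h1]
    exact hD.trans (mul_le_mul_of_nonneg_right hBsqrt (Real.sqrt_nonneg V))
  have hιF20 : 0 ≤ ι ^ 2 * F2 := by positivity
  -- √E ≤ √Lam √V
  have hsE : Real.sqrt E ≤ Real.sqrt Lam * Real.sqrt V := by
    rcases hE0.eq_or_lt with h0 | h0
    · rw [← h0, Real.sqrt_zero]; positivity
    · have hsE0 : 0 < Real.sqrt E := Real.sqrt_pos.mpr h0
      have hEe : Real.sqrt E * Real.sqrt E = E := Real.mul_self_sqrt hE0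
      have : Real.sqrt E * Real.sqrt E ≤ Real.sqrt E * (Real.sqrt Lam * Real.sqrt V) := by
        rw [hEe]
        calc E ≤ E + ι ^ 2 * F2 := by linarith
          _ ≤ Real.sqrt Lam * Real.sqrt E * Real.sqrt V := key
          _ = Real.sqrt E * (Real.sqrt Lam * Real.sqrt V) := by ring
      exact le_of_mul_le_mul_left this hsE0
  have hEV : E ≤ Lam * V := by
    calc E = Real.sqrt E * Real.sqrt E := (Real.mul_self_sqrt hE0).symm
      _ ≤ (Real.sqrt Lam * Real.sqrt V) * (Real.sqrt Lam * Real.sqrt V) :=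
          mul_le_mul hsE hsE (Real.sqrt_nonneg E) (by positivity)
      _ = (Real.sqrt Lam * Real.sqrt Lam) * (Real.sqrt V * Real.sqrt V) := by ring
      _ = Lam * V := by rw [Real.mul_self_sqrt hLam.le, Real.mul_self_sqrt hV0]
  have hF2V : ι ^ 2 * F2 ≤ Lam * V := by
    calc ι ^ 2 * F2 ≤ Real.sqrt Lam * Real.sqrt E * Real.sqrt V := by linarith [key, hE0]
      _ ≤ Real.sqrt Lam * (Real.sqrt Lam * Real.sqrt V) * Real.sqrt V := by
          have h1 : Real.sqrt Lam * Real.sqrt E ≤ Real.sqrt Lam * (Real.sqrt Lam * Real.sqrt V) :=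
            mul_le_mul_of_nonneg_left hsE (Real.sqrt_nonneg Lam)
          exact mul_le_mul_of_nonneg_right h1 (Real.sqrt_nonneg V)
      _ = (Real.sqrt Lam * Real.sqrt Lam) * (Real.sqrt V * Real.sqrt V) := by ring
      _ = Lam * V := by rw [Real.mul_self_sqrt hLam.le, Real.mul_self_sqrt hV0]
  -- conclusion, part 1
  have hGV : G ≤ (Lam / lam) * V := by
    rw [div_mul_eq_mul_div, le_div_iff₀ hlam]
    calc G * lam = lam * G := by ring
      _ ≤ E := hGE
      _ ≤ Lam * V := hEV
  have goal1 : Real.sqrt G + ι * Real.sqrt F2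
      ≤ (Real.sqrt Lam + Real.sqrt (Lam / lam)) * Real.sqrt V := by
    have h1 : Real.sqrt G ≤ Real.sqrt (Lam / lam) * Real.sqrt V := by
      rw [← Real.sqrt_mul (by positivity)]
      exact Real.sqrt_le_sqrt hGV
    have h2 : ι * Real.sqrt F2 ≤ Real.sqrt Lam * Real.sqrt V := by
      have hmm : ι * Real.sqrt F2 = Real.sqrt (ι ^ 2 * F2) := by
        rw [Real.sqrt_mul (by positivity), Real.sqrt_sq hι.le]
      rw [hmm, ← Real.sqrt_mul hLam.le]
      exact Real.sqrt_le_sqrt hF2V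
    rw [add_mul]
    linarith
  -- volume of the cube
  have hvolK : (volume K).toReal = δ ^ d := cube_volume d x₀ δ hδ
  have goal2 : Real.sqrt V = δ ^ ((d : ℝ) / 2) * Real.sqrt S := by
    rw [hVdef, hvolK, Real.sqrt_mul (by positivity)]
    congr 1
    rw [Real.sqrt_eq_rpow, ← Real.rpow_natCast δ d, ← Real.rpow_mul hδ.le]
    congr 1
    ring
  rw [hVlint]
  exact ⟨goal1, goal2⟩
end
end

section
/- Let d ≥ 1, λ > 0, Λ > 0, and let D ⊂ ℝ^d be a measurable set of finite positive Lebesgue measure. Let A : ℝ^d → ℝ^{d×d} be measurable and satisfy, for a.e. x ∈ D and all ζ ∈ ℝ^d, A(x)ζ·ζ ≥ λ|ζ|² and A(x)ζ·ζ ≥ |A(x)ζ|²/Λ. Let g : D → ℝ^d be measurable with ∫_D |g|² dx < ∞, let s ≥ 0, and let ξ, q ∈ ℝ^d satisfy: ⟨g⟩_D = ξ (the mean of g over D equals ξ), q = ⟨A g⟩_D (the mean of the flux), and q·ξ = ⟨A g · g⟩_D + s. Then q·ξ ≥ λ|ξ|² and q·ξ ≥ |q|²/Λ. -/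
open MeasureTheory Matrix

noncomputable section

/-- Jensen / Cauchy–Schwarz: square of the integral is at most the total mass
times the integral of the square. -/
lemma sq_integral_le_aux {α : Type*} [MeasurableSpace α] (μ : Measure α) [IsFiniteMeasure μ]
    (hpos : 0 < (μ Set.univ).toReal)
    (f : α → ℝ) (hf : Integrable f μ) (hf2 : Integrable (fun x => f x ^ 2) μ) :
    (∫ x, f x ∂μ) ^ 2 ≤ (μ Set.univ).toReal * ∫ x, f x ^ 2 ∂μ := by
  set V := (μ Set.univ).toReal with hV
  set c := ∫ x, f x ∂μ with hc
  have h0 : 0 ≤ ∫ x, (V * f x - c) ^ 2 ∂μ := integral_nonneg fun x => sq_nonneg _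
  have hrw : ∀ x, (V * f x - c) ^ 2 = V ^ 2 * f x ^ 2 - 2 * V * c * f x + c ^ 2 := by
    intro x; ring
  have h1 : Integrable (fun x => V ^ 2 * f x ^ 2) μ := hf2.const_mul _
  have h2 : Integrable (fun x => 2 * V * c * f x) μ := hf.const_mul _
  have h12 : Integrable (fun x => V ^ 2 * f x ^ 2 - 2 * V * c * f x) μ := h1.sub h2
  have hint : ∫ x, (V * f x - c) ^ 2 ∂μ
      = V ^ 2 * (∫ x, f x ^ 2 ∂μ) - 2 * V * c * c + V * c ^ 2 := by
    simp_rw [hrw]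
    rw [integral_add h12 (integrable_const _), integral_sub h1 h2, integral_const_mul,
      integral_const_mul, integral_const, smul_eq_mul, measureReal_def, ← hc, ← hV]
  rw [hint] at h0
  nlinarith [h0, hpos, sq_nonneg c, sq_nonneg V]

/-- The numerically homogenized flux/gradient pair inherits the ellipticity class `M(λ,Λ)`. -/
theorem homogenized_matrix_ellipticity
    (d : ℕ) (hd : 1 ≤ d) (lam Lam : ℝ) (hlam : 0 < lam) (hLam : 0 < Lam)
    (D : Set (Fin d → ℝ)) (hD : MeasurableSet D)
    (hDpos : 0 < volume D) (hDfin : volume D < ⊤)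
    (A : (Fin d → ℝ) → Matrix (Fin d) (Fin d) ℝ)
    (hAmeas : ∀ i j, Measurable (fun x => A x i j))
    (hell : ∀ᵐ x ∂(volume.restrict D), ∀ ζ : Fin d → ℝ,
      lam * ∑ i, ζ i ^ 2 ≤ (A x).mulVec ζ ⬝ᵥ ζ ∧
      (∑ i, ((A x).mulVec ζ) i ^ 2) / Lam ≤ (A x).mulVec ζ ⬝ᵥ ζ)
    (g : (Fin d → ℝ) → (Fin d → ℝ)) (hgmeas : Measurable g)
    (hg2 : IntegrableOn (fun x => ∑ i, g x i ^ 2) D volume)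
    (s : ℝ) (hs : 0 ≤ s) (ξ q : Fin d → ℝ)
    (hmean : ((volume D).toReal)⁻¹ • (∫ x in D, g x) = ξ)
    (hflux : q = ((volume D).toReal)⁻¹ • (∫ x in D, (A x).mulVec (g x)))
    (henergy : q ⬝ᵥ ξ = ((volume D).toReal)⁻¹ * (∫ x in D, (A x).mulVec (g x) ⬝ᵥ g x) + s) :
    lam * ∑ i, ξ i ^ 2 ≤ q ⬝ᵥ ξ ∧ (∑ i, q i ^ 2) / Lam ≤ q ⬝ᵥ ξ := by
  classical
  set ν := volume.restrict D with hν
  haveI : IsFiniteMeasure ν := ⟨by rw [hν, Measure.restrict_apply_univ]; exact hDfin⟩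
  set V := (volume D).toReal with hVdef
  have hVpos : 0 < V := ENNReal.toReal_pos hDpos.ne' hDfin.ne
  have hνuniv : (ν Set.univ).toReal = V := by rw [hν, Measure.restrict_apply_univ]
  set h : (Fin d → ℝ) → (Fin d → ℝ) := fun x => (A x).mulVec (g x) with hh
  have hgim : ∀ i, Measurable fun x => g x i := fun i => (measurable_pi_apply i).comp hgmeas
  have hhm : ∀ i, Measurable fun x => h x i := by
    intro i
    simp only [hh, Matrix.mulVec, dotProduct]
    exact Finset.measurable_sum _ fun j _ => (hAmeas i j).mul (hgim j)
  have hdotm : Measurable fun x => h x ⬝ᵥ g x := by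
    simp only [dotProduct]
    exact Finset.measurable_sum _ fun i _ => (hhm i).mul (hgim i)
  -- core pointwise estimates
  have hae : ∀ᵐ x ∂ν, (0 ≤ h x ⬝ᵥ g x) ∧ lam * ∑ i, g x i ^ 2 ≤ h x ⬝ᵥ g x ∧
      (∑ i, h x i ^ 2) ≤ Lam * (h x ⬝ᵥ g x) ∧ h x ⬝ᵥ g x ≤ Lam * ∑ i, g x i ^ 2 := by
    filter_upwards [hell] with x hx
    obtain ⟨h1, h2⟩ := hx (g x)
    have hgx : h x = (A x).mulVec (g x) := rfl
    rw [← hgx] at h1 h2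
    have hg0 : 0 ≤ ∑ i, g x i ^ 2 := Finset.sum_nonneg fun i _ => sq_nonneg _
    have hpos : 0 ≤ h x ⬝ᵥ g x := le_trans (mul_nonneg hlam.le hg0) h1
    have h2' : ∑ i, h x i ^ 2 ≤ Lam * (h x ⬝ᵥ g x) := by
      rw [div_le_iff₀ hLam] at h2; linarith [h2]
    have hCS : (h x ⬝ᵥ g x) ^ 2 ≤ (∑ i, h x i ^ 2) * ∑ i, g x i ^ 2 := by
      simpa [dotProduct] using Finset.sum_mul_sq_le_sq_mul_sq Finset.univ (h x) (g x)
    refine ⟨hpos, h1, h2', ?_⟩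
    rcases hpos.eq_or_lt with h0 | h0
    · rw [← h0]; exact mul_nonneg hLam.le hg0
    · have : (h x ⬝ᵥ g x) * (h x ⬝ᵥ g x) ≤ (h x ⬝ᵥ g x) * (Lam * ∑ i, g x i ^ 2) := by
        nlinarith [mul_le_mul_of_nonneg_right h2' hg0]
      exact le_of_mul_le_mul_left this h0
  -- integrability
  have hg2' : Integrable (fun x => ∑ i, g x i ^ 2) ν := hg2
  have hdgi : Integrable (fun x => h x ⬝ᵥ g x) ν := by
    refine Integrable.mono' (hg2'.const_mul Lam) hdotm.aestronglyMeasurable ?_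
    filter_upwards [hae] with x hx
    rw [Real.norm_eq_abs, abs_of_nonneg hx.1]; exact hx.2.2.2
  have hsumh2 : Integrable (fun x => ∑ i, h x i ^ 2) ν := by
    refine Integrable.mono' (hdgi.const_mul Lam)
      (Finset.measurable_sum _ fun i _ => (hhm i).pow measurable_const).aestronglyMeasurable ?_
    filter_upwards [hae] with x hx
    rw [Real.norm_eq_abs, abs_of_nonneg (Finset.sum_nonneg fun i _ => sq_nonneg _)]
    exact hx.2.2.1
  have hgi2 : ∀ i, Integrable (fun x => g x i ^ 2) ν := by
    intro i
    refine Integrable.mono' hg2' ((hgim i).pow measurable_const).aestronglyMeasurable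
      (Filter.Eventually.of_forall fun x => ?_)
    rw [Real.norm_eq_abs, abs_of_nonneg (sq_nonneg _)]
    exact Finset.single_le_sum (f := fun j => g x j ^ 2) (fun j _ => sq_nonneg _)
      (Finset.mem_univ i)
  have hhi2 : ∀ i, Integrable (fun x => h x i ^ 2) ν := by
    intro i
    refine Integrable.mono' hsumh2 ((hhm i).pow measurable_const).aestronglyMeasurable
      (Filter.Eventually.of_forall fun x => ?_)
    rw [Real.norm_eq_abs, abs_of_nonneg (sq_nonneg _)]
    exact Finset.single_le_sum (f := fun j => h x j ^ 2) (fun j _ => sq_nonneg _)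
      (Finset.mem_univ i)
  have habs : ∀ t : ℝ, |t| ≤ t ^ 2 + 1 := by
    intro t
    nlinarith [sq_abs t, sq_nonneg (|t| - 1), abs_nonneg t]
  have hgi : ∀ i, Integrable (fun x => g x i) ν := by
    intro i
    refine Integrable.mono' ((hgi2 i).add (integrable_const 1)) (hgim i).aestronglyMeasurable
      (Filter.Eventually.of_forall fun x => ?_)
    rw [Real.norm_eq_abs]; exact habs _
  have hhi : ∀ i, Integrable (fun x => h x i) ν := by
    intro i
    refine Integrable.mono' ((hhi2 i).add (integrable_const 1)) (hhm i).aestronglyMeasurable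
      (Filter.Eventually.of_forall fun x => ?_)
    rw [Real.norm_eq_abs]; exact habs _
  have piInt : ∀ (f : (Fin d → ℝ) → (Fin d → ℝ)), (∀ i, Measurable fun x => f x i) →
      (∀ i, Integrable (fun x => f x i) ν) → Integrable f ν := by
    intro f hm hi
    refine Integrable.mono' (integrable_finset_sum Finset.univ fun i _ => (hi i).abs)
      (measurable_pi_lambda _ hm).aestronglyMeasurable
      (Filter.Eventually.of_forall fun x => ?_)
    refine (pi_norm_le_iff_of_nonneg (Finset.sum_nonneg fun i _ => abs_nonneg _)).mpr fun i => ?_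
    exact Finset.single_le_sum (f := fun j => |f x j|) (fun j _ => abs_nonneg _)
      (Finset.mem_univ i)
  have hgInt : Integrable g ν := piInt g hgim hgi
  have hhInt : Integrable h ν := piInt h hhm hhi
  -- component formulas for ξ and q
  have hproj : ∀ (f : (Fin d → ℝ) → (Fin d → ℝ)), Integrable f ν → ∀ i,
      (∫ x, f x ∂ν) i = ∫ x, f x i ∂ν := by
    intro f hf i
    exact ((ContinuousLinearMap.proj (R := ℝ) (φ := fun _ : Fin d => ℝ) i).integral_comp_comm
      hf).symm
  have hξi : ∀ i, ξ i = V⁻¹ * ∫ x, g x i ∂ν := by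
    intro i
    rw [← hmean, Pi.smul_apply, smul_eq_mul, hproj g hgInt i]
  have hqi : ∀ i, q i = V⁻¹ * ∫ x, h x i ∂ν := by
    intro i
    rw [hflux, Pi.smul_apply, smul_eq_mul, hproj h hhInt i]
  -- Jensen for each component
  have key : ∀ (c I : ℝ), c ^ 2 ≤ V * I → (V⁻¹ * c) ^ 2 ≤ V⁻¹ * I := by
    intro c I hcI
    rw [mul_pow, sq]
    calc V⁻¹ * V⁻¹ * c ^ 2 ≤ V⁻¹ * V⁻¹ * (V * I) :=
          mul_le_mul_of_nonneg_left hcI (by positivity)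
      _ = V⁻¹ * I := by
          field_simp
  have jg : ∀ i, (ξ i) ^ 2 ≤ V⁻¹ * ∫ x, g x i ^ 2 ∂ν := by
    intro i
    rw [hξi i]
    exact key _ _ (by simpa [hνuniv] using sq_integral_le_aux ν (hνuniv ▸ hVpos) _ (hgi i) (hgi2 i))
  have jh : ∀ i, (q i) ^ 2 ≤ V⁻¹ * ∫ x, h x i ^ 2 ∂ν := by
    intro i
    rw [hqi i]
    exact key _ _ (by simpa [hνuniv] using sq_integral_le_aux ν (hνuniv ▸ hVpos) _ (hhi i) (hhi2 i))
  have hgsum : ∑ i, ξ i ^ 2 ≤ V⁻¹ * ∫ x, ∑ i, g x i ^ 2 ∂ν := by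
    rw [integral_finset_sum _ fun i _ => hgi2 i, Finset.mul_sum]
    exact Finset.sum_le_sum fun i _ => jg i
  have hhsum : ∑ i, q i ^ 2 ≤ V⁻¹ * ∫ x, ∑ i, h x i ^ 2 ∂ν := by
    rw [integral_finset_sum _ fun i _ => hhi2 i, Finset.mul_sum]
    exact Finset.sum_le_sum fun i _ => jh i
  -- integral comparisons
  have hI1 : lam * ∫ x, ∑ i, g x i ^ 2 ∂ν ≤ ∫ x, h x ⬝ᵥ g x ∂ν := by
    rw [← integral_const_mul]
    refine integral_mono_ae (hg2'.const_mul lam) hdgi ?_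
    filter_upwards [hae] with x hx using hx.2.1
  have hI2 : ∫ x, ∑ i, h x i ^ 2 ∂ν ≤ Lam * ∫ x, h x ⬝ᵥ g x ∂ν := by
    rw [← integral_const_mul]
    refine integral_mono_ae hsumh2 (hdgi.const_mul Lam) ?_
    filter_upwards [hae] with x hx using hx.2.2.1
  have hqξ : V⁻¹ * ∫ x, h x ⬝ᵥ g x ∂ν = q ⬝ᵥ ξ - s := by
    rw [henergy]; ring
  constructor
  · calc lam * ∑ i, ξ i ^ 2 ≤ lam * (V⁻¹ * ∫ x, ∑ i, g x i ^ 2 ∂ν) :=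
          mul_le_mul_of_nonneg_left hgsum hlam.le
      _ = V⁻¹ * (lam * ∫ x, ∑ i, g x i ^ 2 ∂ν) := by ring
      _ ≤ V⁻¹ * ∫ x, h x ⬝ᵥ g x ∂ν := mul_le_mul_of_nonneg_left hI1 (by positivity)
      _ = q ⬝ᵥ ξ - s := hqξ
      _ ≤ q ⬝ᵥ ξ := by linarith
  · rw [div_le_iff₀ hLam]
    calc ∑ i, q i ^ 2 ≤ V⁻¹ * ∫ x, ∑ i, h x i ^ 2 ∂ν := hhsum
      _ ≤ V⁻¹ * (Lam * ∫ x, h x ⬝ᵥ g x ∂ν) := mul_le_mul_of_nonneg_left hI2 (by positivity)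
      _ = Lam * (V⁻¹ * ∫ x, h x ⬝ᵥ g x ∂ν) := by ring
      _ = Lam * (q ⬝ᵥ ξ - s) := by rw [hqξ]
      _ ≤ q ⬝ᵥ ξ * Lam := by nlinarith [hLam, hs]
end
end
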